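/- arXiv:0803.3778 — 8 statements merged into one kernel-verified Lean document; each statement's English description precedes it below -/
import Mathlib

section
/- In a triangle, the sidelengths satisfy 2β = α + γ if and only if tan(A/2)·tan(Γ/2) = 1/3. -/
theorem sides_AP_iff_tan_half_product (A B Γ α β γ r τ : ℝ)
    (hA : 0 < A) (hA' : A < Real.pi) (hB : 0 < B) (hB' : B < Real.pi)
    (hΓ : 0 < Γ) (hΓ' : Γ < Real.pi) (hsum : A + B + Γ = Real.pi)
    (hα : 0 < α) (hβ : 0 < β) (hγ : 0 < γ)
    (hτ : τ = (α + β + γ) / 2)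
    (hτα : 0 < τ - α) (hτβ : 0 < τ - β) (hτγ : 0 < τ - γ)
    (hr : 0 < r)
    (h1 : Real.tan (A / 2) = r / (τ - α))
    (h3 : Real.tan (Γ / 2) = r / (τ - γ))
    (hr2 : r ^ 2 = (τ - α) * (τ - β) * (τ - γ) / τ) :
    2 * β = α + γ ↔ Real.tan (A / 2) * Real.tan (Γ / 2) = 1 / 3 := by
  have hτ0 : 0 < τ := by linarith
  rw [h1, h3]
  have key : r / (τ - α) * (r / (τ - γ)) = (τ - β) / τ := by
    have hr2' : r ^ 2 * τ = (τ - α) * (τ - β) * (τ - γ) := by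
      rw [hr2]; field_simp
    field_simp
    nlinarith [hr2']
  rw [key]
  constructor
  · intro h
    rw [div_eq_div_iff hτ0.ne' (by norm_num : (3:ℝ) ≠ 0)]
    linarith
  · intro h
    rw [div_eq_div_iff hτ0.ne' (by norm_num : (3:ℝ) ≠ 0)] at h
    linarith
end

section
/- In a triangle, the squares of the sidelengths α², β², γ² are in arithmetic progression (2β² = α² + γ²) if and only if cot A, cot B, cot Γ are in arithmetic progression (2·cot B = cot A + cot Γ). -/
/-!
By the law of cosines, `sin² A = 1 - cos² A = Q / (2βγ)²` with `Q = 16 · (area)²` symmetric in the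
sides, so `cot A = (β² + γ² - α²) / √Q` and similarly for `B`, `Γ`. The three cotangents share the
denominator `√Q > 0`, and the numerators satisfy `(β² + γ² - α²) + (α² + β² - γ²) = 2β²`.
-/

open Real

/-- Sixteen times the squared area of a triangle with sides `a`, `b`, `c` (Heron's formula). -/
def heronQuartic (a b c : ℝ) : ℝ :=
  2 * a ^ 2 * b ^ 2 + 2 * b ^ 2 * c ^ 2 + 2 * c ^ 2 * a ^ 2 - a ^ 4 - b ^ 4 - c ^ 4

lemma heronQuartic_swap_left (a b c : ℝ) : heronQuartic b a c = heronQuartic a b c := by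
  unfold heronQuartic; ring

lemma heronQuartic_rotate (a b c : ℝ) : heronQuartic c a b = heronQuartic a b c := by
  unfold heronQuartic; ring

section LawOfCosines

variable {X x y z : ℝ} (hy : 0 < y) (hz : 0 < z)
  (hcos : cos X = (y ^ 2 + z ^ 2 - x ^ 2) / (2 * y * z))
include hy hz hcos

lemma sin_sq_eq_heronQuartic_div : sin X ^ 2 = heronQuartic x y z / (2 * y * z) ^ 2 := by
  rw [sin_sq, hcos, heronQuartic]
  field_simp
  ring

lemma sin_eq_sqrt_heronQuartic_div (hX : 0 < X) (hX' : X < π) :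
    sin X = √(heronQuartic x y z) / (2 * y * z) := by
  rw [← sqrt_sq (sin_pos_of_pos_of_lt_pi hX hX').le, sin_sq_eq_heronQuartic_div hy hz hcos,
    sqrt_div' _ (by positivity), sqrt_sq (by positivity)]

lemma cot_eq_div_sqrt_heronQuartic (hX : 0 < X) (hX' : X < π) :
    cot X = (y ^ 2 + z ^ 2 - x ^ 2) / √(heronQuartic x y z) := by
  rw [cot_eq_cos_div_sin, hcos, sin_eq_sqrt_heronQuartic_div hy hz hcos hX hX']
  field_simp

end LawOfCosines

theorem squares_AP_iff_cot_AP_general (A B Γ α β γ : ℝ)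
    (hA : 0 < A) (hA' : A < Real.pi) (hB : 0 < B) (hB' : B < Real.pi)
    (hΓ : 0 < Γ) (hΓ' : Γ < Real.pi)
    (hα : 0 < α) (hβ : 0 < β) (hγ : 0 < γ)
    (hcosA : Real.cos A = (β ^ 2 + γ ^ 2 - α ^ 2) / (2 * β * γ))
    (hcosB : Real.cos B = (α ^ 2 + γ ^ 2 - β ^ 2) / (2 * α * γ))
    (hcosΓ : Real.cos Γ = (α ^ 2 + β ^ 2 - γ ^ 2) / (2 * α * β)) :
    2 * β ^ 2 = α ^ 2 + γ ^ 2 ↔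
      2 * Real.cot B = Real.cot A + Real.cot Γ := by
  have hcotA := cot_eq_div_sqrt_heronQuartic hβ hγ hcosA hA hA'
  have hcotB := cot_eq_div_sqrt_heronQuartic hα hγ hcosB hB hB'
  have hcotΓ := cot_eq_div_sqrt_heronQuartic hα hβ hcosΓ hΓ hΓ'
  rw [heronQuartic_swap_left] at hcotB
  rw [heronQuartic_rotate] at hcotΓ
  have hsqrt : √(heronQuartic α β γ) ≠ 0 := by
    have hsinB := sin_pos_of_pos_of_lt_pi hB hB'
    rw [sin_eq_sqrt_heronQuartic_div hα hγ hcosB hB hB', heronQuartic_swap_left] at hsinB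
    exact ((div_pos_iff_of_pos_right (by positivity)).mp hsinB).ne'
  rw [hcotA, hcotB, hcotΓ, ← add_div, ← mul_div_assoc, div_left_inj' hsqrt]
  constructor <;> intro h <;> linarith

theorem squares_AP_iff_cot_AP (A B Γ α β γ : ℝ)
    (hA : 0 < A) (hA' : A < Real.pi) (hB : 0 < B) (hB' : B < Real.pi)
    (hΓ : 0 < Γ) (hΓ' : Γ < Real.pi) (hsum : A + B + Γ = Real.pi)
    (hα : 0 < α) (hβ : 0 < β) (hγ : 0 < γ)
    (hcosA : Real.cos A = (β ^ 2 + γ ^ 2 - α ^ 2) / (2 * β * γ))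
    (hcosB : Real.cos B = (α ^ 2 + γ ^ 2 - β ^ 2) / (2 * α * γ))
    (hcosΓ : Real.cos Γ = (α ^ 2 + β ^ 2 - γ ^ 2) / (2 * α * β)) :
    2 * β ^ 2 = α ^ 2 + γ ^ 2 ↔
      2 * Real.cot B = Real.cot A + Real.cot Γ :=
  squares_AP_iff_cot_AP_general A B Γ α β γ hA hA' hB hB' hΓ hΓ' hα hβ hγ hcosA hcosB hcosΓ
end

section
/- If in a triangle both the angles A, B, Γ and the sides α, β, γ form arithmetic progressions, then the triangle is equilateral: A = B = Γ = 60° and α = β = γ. -/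
theorem both_AP_implies_equilateral (A B Γ α β γ : ℝ)
    (hA : 0 < A) (hB : 0 < B) (hΓ : 0 < Γ) (hsum : A + B + Γ = Real.pi)
    (hα : 0 < α) (hβ : 0 < β) (hγ : 0 < γ)
    (hcosA : Real.cos A = (β ^ 2 + γ ^ 2 - α ^ 2) / (2 * β * γ))
    (hcosB : Real.cos B = (α ^ 2 + γ ^ 2 - β ^ 2) / (2 * α * γ))
    (hcosΓ : Real.cos Γ = (α ^ 2 + β ^ 2 - γ ^ 2) / (2 * α * β))
    (hapA : 2 * B = A + Γ) (hapS : 2 * β = α + γ) :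
    A = Real.pi / 3 ∧ B = Real.pi / 3 ∧ Γ = Real.pi / 3 ∧ α = β ∧ β = γ := by
  have hBval : B = Real.pi / 3 := by linarith
  have hcB : Real.cos B = 1 / 2 := by
    rw [hBval, Real.cos_pi_div_three]
  rw [hcB] at hcosB
  have hβval : β = (α + γ) / 2 := by linarith
  have hne : 2 * α * γ ≠ 0 := by positivity
  have key : α ^ 2 + γ ^ 2 - β ^ 2 = (2 * α * γ) * (1 / 2) := by
    field_simp at hcosB; linarith
  have hαγ : α = γ := by
    have : (α - γ) ^ 2 = 0 := by rw [hβval] at key; ring_nf at key ⊢; nlinarith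
    nlinarith [sq_nonneg (α - γ)]
  have hαβ : α = β := by rw [hβval, hαγ]; ring
  have hcA : Real.cos A = 1 / 2 := by
    rw [hcosA, ← hαβ, hαγ]; field_simp; ring
  have hAval : A = Real.pi / 3 := by
    have := Real.injOn_cos (Set.mem_Icc.2 ⟨le_of_lt hA, by linarith [Real.pi_pos]⟩)
      (Set.mem_Icc.2 ⟨by positivity, by linarith [Real.pi_pos]⟩)
      (show Real.cos A = Real.cos (Real.pi/3) by rw [hcA, Real.cos_pi_div_three])
    exact this
  refine ⟨hAval, hBval, by linarith, hαβ, by rw [← hαβ, hαγ]⟩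
end

section
/- In a triangle, the sides α, β, γ form a harmonic progression (2/β = 1/α + 1/γ) if and only if sin²(A/2), sin²(B/2), sin²(Γ/2) form a harmonic progression. -/
lemma csc_sq_half (X r t : ℝ) (hX : 0 < X) (hX' : X < Real.pi) (hr : 0 < r)
    (ht : 0 < t) (h : Real.tan (X / 2) = r / t) :
    1 / Real.sin (X / 2) ^ 2 = 1 + (t / r) ^ 2 := by
  have hs : 0 < Real.sin (X / 2) :=
    Real.sin_pos_of_pos_of_lt_pi (by linarith) (by linarith [Real.pi_pos])
  have hc : 0 < Real.cos (X / 2) :=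
    Real.cos_pos_of_mem_Ioo ⟨by linarith [Real.pi_pos], by linarith⟩
  rw [Real.tan_eq_sin_div_cos] at h
  have key : Real.sin (X / 2) * t = Real.cos (X / 2) * r := by
    field_simp at h; linarith
  have key2 : Real.sin (X / 2) ^ 2 * t ^ 2 = Real.cos (X / 2) ^ 2 * r ^ 2 := by
    linear_combination (Real.sin (X / 2) * t + Real.cos (X / 2) * r) * key
  have hpy := Real.sin_sq_add_cos_sq (X / 2)
  field_simp
  linear_combination (-r ^ 2) * hpy - key2

theorem sides_HP_iff_sin_sq_half_HP (A B Γ α β γ r τ : ℝ)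
    (hA : 0 < A) (hA' : A < Real.pi) (hB : 0 < B) (hB' : B < Real.pi)
    (hΓ : 0 < Γ) (hΓ' : Γ < Real.pi) (hsum : A + B + Γ = Real.pi)
    (hα : 0 < α) (hβ : 0 < β) (hγ : 0 < γ)
    (hτ : τ = (α + β + γ) / 2)
    (hτα : 0 < τ - α) (hτβ : 0 < τ - β) (hτγ : 0 < τ - γ)
    (hr : 0 < r)
    (h1 : Real.tan (A / 2) = r / (τ - α))
    (h2 : Real.tan (B / 2) = r / (τ - β))
    (h3 : Real.tan (Γ / 2) = r / (τ - γ)) :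
    2 / β = 1 / α + 1 / γ ↔
      2 / Real.sin (B / 2) ^ 2 =
        1 / Real.sin (A / 2) ^ 2 + 1 / Real.sin (Γ / 2) ^ 2 := by
  have eA := csc_sq_half A r (τ - α) hA hA' hr hτα h1
  have eB := csc_sq_half B r (τ - β) hB hB' hr hτβ h2
  have eΓ := csc_sq_half Γ r (τ - γ) hΓ hΓ' hr hτγ h3
  rw [show (2 : ℝ) / Real.sin (B / 2) ^ 2 = 2 * (1 / Real.sin (B / 2) ^ 2) by ring,
    eA, eB, eΓ]
  subst hτ
  have hr' := hr.ne'
  constructor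
  · intro h
    have h' : 2 * α * γ = β * α + β * γ := by
      field_simp at h; linarith
    linear_combination (1 / r ^ 2) * h'
  · intro h
    have h' : 2 * α * γ = β * α + β * γ := by
      have h2' := h
      field_simp at h2'
      nlinarith [h2', sq_nonneg r]
    field_simp
    linear_combination h'
end

section
/- If positive reals α ≤ β ≤ γ satisfy β² = α² + γ² − αγ and the triangle inequalities, then the ratio ρ = (α + β + γ)/β satisfies 2 < ρ ≤ 3, with ρ = 3 if and only if α = β = γ. -/
theorem ratio_rho_range (α β γ : ℝ)
    (hα : 0 < α) (hβ : 0 < β) (hγ : 0 < γ)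
    (hab : α ≤ β) (hbc : β ≤ γ)
    (hloc : β ^ 2 = α ^ 2 + γ ^ 2 - α * γ)
    (htri : α + β > γ) :
    2 < (α + β + γ) / β ∧ (α + β + γ) / β ≤ 3 ∧
      ((α + β + γ) / β = 3 ↔ (α = β ∧ β = γ)) := by
  have h2 : 2 * β < α + β + γ := by linarith
  have h3 : α + β + γ ≤ 3 * β := by nlinarith [sq_nonneg (α - γ)]
  refine ⟨(lt_div_iff₀ hβ).2 (by linarith), (div_le_iff₀ hβ).2 (by linarith), ?_, ?_⟩
  · intro h
    have heq : α + β + γ = 3 * β := by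
      field_simp at h; linarith
    have hag : α = γ := by nlinarith [sq_nonneg (α - γ)]
    constructor <;> nlinarith [sq_nonneg (α - β)]
  · rintro ⟨h1, h2⟩
    subst h1; subst h2
    field_simp; ring
end

section
/- If positive reals α ≤ β ≤ γ satisfy β² = α² + γ² − αγ with ρ = (α+β+γ)/β, then ρ = 1 + √3 if and only if γ² = α² + β² (the triangle is right-angled at Γ). -/
theorem rho_eq_one_add_sqrt3_iff_right (α β γ : ℝ)
    (hα : 0 < α) (hβ : 0 < β) (hγ : 0 < γ)
    (hab : α ≤ β) (hbc : β ≤ γ)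
    (hloc : β ^ 2 = α ^ 2 + γ ^ 2 - α * γ) :
    (α + β + γ) / β = 1 + Real.sqrt 3 ↔ γ ^ 2 = α ^ 2 + β ^ 2 := by
  have hs : Real.sqrt 3 ^ 2 = 3 := Real.sq_sqrt (by norm_num)
  have hspos : (0:ℝ) < Real.sqrt 3 := Real.sqrt_pos.mpr (by norm_num)
  set s := Real.sqrt 3 with hs_def
  constructor
  · intro h
    have h1 : α + β + γ = (1 + s) * β := by
      field_simp at h; linarith
    have h2 : α + γ = s * β := by linarith
    have h3 : (α + γ) ^ 2 = 3 * β ^ 2 := by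
      rw [h2]; nlinarith
    have h4 : (γ - 2 * α) * (2 * γ - α) = 0 := by nlinarith
    have h5 : γ = 2 * α := by
      rcases mul_eq_zero.mp h4 with h | h
      · linarith
      · nlinarith
    nlinarith
  · intro h
    have h5 : γ = 2 * α := by nlinarith
    have hb : β ^ 2 = 3 * α ^ 2 := by nlinarith
    have hbe : β = s * α := by
      have : (s * α) ^ 2 = β ^ 2 := by nlinarith
      nlinarith [sq_nonneg (β - s * α), mul_pos hspos hα]
    rw [h5, hbe]
    field_simp
    nlinarith
end

section
/- For any positive reals β, τ with ρ = 2τ/β ∈ (2, 3], setting α = (β/2)(ρ − 1 − √((3−ρ)(1+ρ)/3)) and γ = (β/2)(ρ − 1 + √((3−ρ)(1+ρ)/3)), the three triangle inequalities α + β > γ, β + γ > α, α + γ > β all hold. -/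
theorem constructed_sides_triangle_inequalities (β τ ρ α γ : ℝ)
    (hβ : 0 < β) (hτ : 0 < τ) (hρ : ρ = 2 * τ / β)
    (hρ2 : 2 < ρ) (hρ3 : ρ ≤ 3)
    (hα : α = (β / 2) * (ρ - 1 - Real.sqrt ((3 - ρ) * (1 + ρ) / 3)))
    (hγ : γ = (β / 2) * (ρ - 1 + Real.sqrt ((3 - ρ) * (1 + ρ) / 3))) :
    α + β > γ ∧ β + γ > α ∧ α + γ > β := by
  set s := Real.sqrt ((3 - ρ) * (1 + ρ) / 3) with hs
  have hs0 : 0 ≤ s := Real.sqrt_nonneg _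
  have hs1 : s < 1 := by
    rw [hs, Real.sqrt_lt' one_pos]
    nlinarith
  refine ⟨by nlinarith, by nlinarith, by nlinarith⟩
end

section
/- Let d, κ, λ be positive integers such that α = dκλ, β = d(3κ² + λ²)/4, and γ = d(2κλ + |3κ² − λ²|)/4 are integers. Then β² = α² + γ² − αγ; moreover α ≤ β ≤ γ holds if and only if λ ≤ κ or λ ≥ 3κ. -/
theorem parametric_triangle_formulas (d κ l α β γ : ℤ)
    (hd : 0 < d) (hκ : 0 < κ) (hl : 0 < l)
    (hα : α = d * κ * l)
    (hβ : 4 * β = d * (3 * κ ^ 2 + l ^ 2))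
    (hγ : 4 * γ = d * (2 * κ * l + |3 * κ ^ 2 - l ^ 2|)) :
    β ^ 2 = α ^ 2 + γ ^ 2 - α * γ ∧
      ((α ≤ β ∧ β ≤ γ) ↔ (l ≤ κ ∨ 3 * κ ≤ l)) := by
  subst hα
  rcases abs_cases (3 * κ ^ 2 - l ^ 2) with ⟨he, hs⟩ | ⟨he, hs⟩
  · rw [he] at hγ
    constructor
    · have h16 : 16 * β ^ 2 = 16 * ((d * κ * l) ^ 2 + γ ^ 2 - d * κ * l * γ) := by
        linear_combination (4 * β + d * (3 * κ ^ 2 + l ^ 2)) * hβ -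
          (4 * γ + d * (2 * κ * l + (3 * κ ^ 2 - l ^ 2)) - 4 * d * κ * l) * hγ
      linarith
    · constructor
      · rintro ⟨h1, h2⟩
        left
        nlinarith [mul_pos hd hl, mul_pos hd hκ]
      · rintro (h | h)
        · constructor <;>
            nlinarith [mul_pos hd hl, mul_pos hd hκ, mul_pos (mul_pos hd hκ) hl,
              mul_nonneg (mul_nonneg hd.le (by linarith : (0:ℤ) ≤ 3 * κ - l))
                (by linarith : (0:ℤ) ≤ κ - l)]
        · exfalso; nlinarith
  · rw [he] at hγ
    constructor
    · have h16 : 16 * β ^ 2 = 16 * ((d * κ * l) ^ 2 + γ ^ 2 - d * κ * l * γ) := by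
        linear_combination (4 * β + d * (3 * κ ^ 2 + l ^ 2)) * hβ -
          (4 * γ + d * (2 * κ * l + -(3 * κ ^ 2 - l ^ 2)) - 4 * d * κ * l) * hγ
      linarith
    · constructor
      · rintro ⟨h1, h2⟩
        right
        nlinarith [mul_pos hd hl, mul_pos hd hκ]
      · rintro (h | h)
        · constructor <;>
            nlinarith [mul_pos hd hl, mul_pos hd hκ, mul_pos (mul_pos hd hκ) hl,
              mul_nonneg (mul_nonneg hd.le (by linarith : (0:ℤ) ≤ 3 * κ - l))
                (by linarith : (0:ℤ) ≤ κ - l)]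
        · constructor <;>
            nlinarith [mul_pos hd hl, mul_pos hd hκ, mul_pos (mul_pos hd hκ) hl,
              mul_nonneg (mul_nonneg hd.le (by linarith : (0:ℤ) ≤ l - 3 * κ))
                (by linarith : (0:ℤ) ≤ l - κ)]
end
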